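/- Let λ̃ be the quasi-strategy of Adam defined by the fixpoint W = μX.(U^a ∪ upre_over(X)) in a conservative abstraction, and let upre_{γ(λ̃)}(S) = { q | ∃σ_u ∈ γ(λ̃)(q), ∀σ_c, δ(q,σ_u,σ_c) ∈ S } be the concrete uncontrollable predecessor restricted to the concretized quasi-strategy. Then q_I ∉ μX.(U ∪ upre_{γ(λ̃)}(X)) if and only if q_I ∉ μX.(U ∪ upre(X)). -/

import Mathlib

/-!
The abstract fixpoint `W` over-approximates Adam's concrete winning region: the concretization
`⋃₀ W` is a prefixed point of `X ↦ U ∪ upre δ X`. Hence whenever Adam can force the play into a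
set `S` of states lying inside `⋃₀ W`, every successor of the current block under his move lands
in a block of `W`, i.e. the move is allowed by `λ̃`. So `upre` and its restriction to `γ(λ̃)`
agree on all sets below the concrete fixpoint, and the two least fixpoints coincide.
-/

/-- Abstract transition relation: existential lift of the concrete transition function. -/
def absDelta {Q Au Ac : Type*} (δ : Q → Au → Ac → Q) (P : Set (Set Q))
    (s : Set Q) (σu : Au) (σc : Ac) (s' : Set Q) : Prop :=
  s ∈ P ∧ s' ∈ P ∧ ∃ q ∈ s, δ q σu σc ∈ s'

/-- Concrete uncontrollable predecessors. -/
def upre {Q Au Ac : Type*} (δ : Q → Au → Ac → Q) (S : Set Q) : Set Q :=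
  {q | ∃ σu : Au, ∀ σc : Ac, δ q σu σc ∈ S}

/-- Over-approximating abstract uncontrollable predecessors. -/
def upreOver {Q Au Ac : Type*} (δ : Q → Au → Ac → Q) (P : Set (Set Q))
    (Sa : Set (Set Q)) : Set (Set Q) :=
  {qa ∈ P | ∃ σu : Au, ∀ σc : Ac, ∃ ra ∈ Sa, absDelta δ P qa σu σc ra}

/-- Least fixpoint of a set operator (intersection of prefixed points). -/
def lfpSet {α : Type*} (F : Set α → Set α) : Set α := ⋂₀ {X | F X ⊆ X}

section LeastFixpoint

variable {α : Type*} {F G : Set α → Set α}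

theorem lfpSet_subset {X : Set α} (hX : F X ⊆ X) : lfpSet F ⊆ X :=
  Set.sInter_subset_of_mem hX

theorem map_lfpSet (hF : Monotone F) : F (lfpSet F) = lfpSet F :=
  OrderHom.map_lfp ⟨F, hF⟩

theorem lfpSet_mono (h : ∀ X, G X ⊆ F X) : lfpSet G ⊆ lfpSet F :=
  Set.sInter_subset_sInter fun _ hX => (h _).trans hX

theorem lfpSet_eq_of_subset_of_agree (hG : Monotone G) (hGF : ∀ X, G X ⊆ F X)
    (hFG : ∀ X ⊆ lfpSet F, F X ⊆ G X) : lfpSet G = lfpSet F := by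
  have hle : lfpSet G ⊆ lfpSet F := lfpSet_mono hGF
  refine hle.antisymm (lfpSet_subset ?_)
  calc F (lfpSet G) ⊆ G (lfpSet G) := hFG _ hle
    _ = lfpSet G := map_lfpSet hG

end LeastFixpoint

section SafetyGame

variable {Q Au Ac : Type*} (δ : Q → Au → Ac → Q) (P : Set (Set Q))

def quasiStrategy (W : Set (Set Q)) (qa : Set Q) : Set Au :=
  {σu | ∀ σc : Ac, ∃ s ∈ W, absDelta δ P qa σu σc s}

/-- `upre_{γ(λ)}`: the block clause says `σu ∈ γ(λ)(q)`. -/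
def upreRestrict (lam : Set Q → Set Au) (S : Set Q) : Set Q :=
  {q | ∃ σu : Au, (∃ b ∈ P, q ∈ b ∧ σu ∈ lam b) ∧ ∀ σc : Ac, δ q σu σc ∈ S}

theorem upre_mono : Monotone (upre δ) :=
  fun _ _ hST _ ⟨σu, hσu⟩ => ⟨σu, fun σc => hST (hσu σc)⟩

theorem upreOver_mono : Monotone (upreOver δ P) :=
  fun _ _ hST _ ⟨hqa, σu, hσu⟩ => ⟨hqa, σu, fun σc =>
    let ⟨ra, hra, habs⟩ := hσu σc
    ⟨ra, hST hra, habs⟩⟩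

theorem upreRestrict_mono (lam : Set Q → Set Au) : Monotone (upreRestrict δ P lam) :=
  fun _ _ hST _ ⟨σu, hlam, hσu⟩ => ⟨σu, hlam, fun σc => hST (hσu σc)⟩

theorem upreRestrict_subset_upre (lam : Set Q → Set Au) (S : Set Q) :
    upreRestrict δ P lam S ⊆ upre δ S :=
  fun _ ⟨σu, _, hσu⟩ => ⟨σu, hσu⟩

theorem lfpSet_abstract_subset {Ua : Set (Set Q)} (hUa : Ua ⊆ P) :
    lfpSet (fun X => Ua ∪ upreOver δ P X) ⊆ P :=
  lfpSet_subset (Set.union_subset hUa (Set.sep_subset _ _))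

variable {δ P}

theorem mem_quasiStrategy {W : Set (Set Q)} (hW : W ⊆ P) {b : Set Q} (hb : b ∈ P) {q : Q}
    (hq : q ∈ b) {σu : Au} (hσu : ∀ σc : Ac, δ q σu σc ∈ ⋃₀ W) :
    σu ∈ quasiStrategy δ P W b := fun σc =>
  let ⟨b', hb'W, hqb'⟩ := hσu σc
  ⟨b', hb'W, hb, hW hb'W, q, hq, hqb'⟩

theorem upre_sUnion_subset (hP : Setoid.IsPartition P) {W : Set (Set Q)} (hW : W ⊆ P) :
    upre δ (⋃₀ W) ⊆ ⋃₀ upreOver δ P W := by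
  rintro q ⟨σu, hσu⟩
  obtain ⟨b, hb, hqb⟩ := Set.mem_sUnion.mp (hP.sUnion_eq_univ ▸ Set.mem_univ q)
  exact ⟨b, ⟨hb, σu, mem_quasiStrategy hW hb hqb hσu⟩, hqb⟩

theorem upre_subset_upreRestrict (hP : Setoid.IsPartition P) {W : Set (Set Q)} (hW : W ⊆ P)
    {S : Set Q} (hS : S ⊆ ⋃₀ W) : upre δ S ⊆ upreRestrict δ P (quasiStrategy δ P W) S := by
  rintro q ⟨σu, hσu⟩
  obtain ⟨b, hb, hqb⟩ := Set.mem_sUnion.mp (hP.sUnion_eq_univ ▸ Set.mem_univ q)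
  exact ⟨σu, ⟨b, hb, hqb, mem_quasiStrategy hW hb hqb fun σc => hS (hσu σc)⟩, hσu⟩

theorem lfpSet_upre_subset_sUnion (hP : Setoid.IsPartition P) {U : Set Q}
    {Ua : Set (Set Q)} (hUa : Ua ⊆ P) (hU : U ⊆ ⋃₀ Ua) :
    lfpSet (fun X => U ∪ upre δ X) ⊆ ⋃₀ lfpSet (fun X => Ua ∪ upreOver δ P X) := by
  set W := lfpSet (fun X => Ua ∪ upreOver δ P X)
  have hWfix : Ua ∪ upreOver δ P W = W :=
    map_lfpSet fun _ _ hST => Set.union_subset_union_right Ua (upreOver_mono δ P hST)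
  refine lfpSet_subset (Set.union_subset ?_ ?_)
  · exact hU.trans (Set.sUnion_mono (hWfix ▸ Set.subset_union_left))
  · exact (upre_sUnion_subset hP (lfpSet_abstract_subset δ P hUa)).trans
      (Set.sUnion_mono (hWfix ▸ Set.subset_union_right))

end SafetyGame

theorem stmt_8_general {Q Au Ac : Type*}
    (δ : Q → Au → Ac → Q) (qI : Q) (U : Set Q)
    (P : Set (Set Q)) (hP : Setoid.IsPartition P)
    (Ua : Set (Set Q)) (hUa : Ua ⊆ P) (hU : U ⊆ ⋃₀ Ua)
    (W : Set (Set Q)) (hW : W = lfpSet (fun X => Ua ∪ upreOver δ P X))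
    -- λ̃ is the quasi-strategy of Adam defined by W
    (lamTilde : Set Q → Set Au)
    (hlam : ∀ qa, lamTilde qa = {σu | ∀ σc : Ac, ∃ s ∈ W, absDelta δ P qa σu σc s})
    -- concrete upre restricted to the concretization γ(λ̃)
    (upreRes : Set Q → Set Q)
    (hres : ∀ S, upreRes S =
      {q | ∃ σu : Au, (∃ b ∈ P, q ∈ b ∧ σu ∈ lamTilde b) ∧ ∀ σc : Ac, δ q σu σc ∈ S}) :
    qI ∉ lfpSet (fun X => U ∪ upreRes X) ↔ qI ∉ lfpSet (fun X => U ∪ upre δ X) := by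
  obtain rfl : lamTilde = quasiStrategy δ P W := funext hlam
  obtain rfl : upreRes = upreRestrict δ P (quasiStrategy δ P W) := funext hres
  have hWP : W ⊆ P := hW ▸ lfpSet_abstract_subset δ P hUa
  have hlfp_sub : lfpSet (fun X => U ∪ upre δ X) ⊆ ⋃₀ W :=
    hW ▸ lfpSet_upre_subset_sUnion hP hUa hU
  rw [lfpSet_eq_of_subset_of_agree
    (fun _ _ hST => Set.union_subset_union_right U (upreRestrict_mono δ P _ hST))
    (fun X => Set.union_subset_union_right U (upreRestrict_subset_upre δ P _ X))
    (fun X hX => Set.union_subset_union_right U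
      (upre_subset_upreRestrict hP hWP (hX.trans hlfp_sub)))]

theorem stmt_8 {Q Au Ac : Type*} [Fintype Q] [Fintype Au] [Fintype Ac]
    (δ : Q → Au → Ac → Q) (qI : Q) (U : Set Q)
    (P : Set (Set Q)) (hP : Setoid.IsPartition P)
    (Ua : Set (Set Q)) (hUa : Ua ⊆ P) (hU : U ⊆ ⋃₀ Ua)
    (W : Set (Set Q)) (hW : W = lfpSet (fun X => Ua ∪ upreOver δ P X))
    -- λ̃ is the quasi-strategy of Adam defined by W
    (lamTilde : Set Q → Set Au)
    (hlam : ∀ qa, lamTilde qa = {σu | ∀ σc : Ac, ∃ s ∈ W, absDelta δ P qa σu σc s})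
    -- concrete upre restricted to the concretization γ(λ̃)
    (upreRes : Set Q → Set Q)
    (hres : ∀ S, upreRes S =
      {q | ∃ σu : Au, (∃ b ∈ P, q ∈ b ∧ σu ∈ lamTilde b) ∧ ∀ σc : Ac, δ q σu σc ∈ S}) :
    qI ∉ lfpSet (fun X => U ∪ upreRes X) ↔ qI ∉ lfpSet (fun X => U ∪ upre δ X) :=
  stmt_8_general δ qI U P hP Ua hUa hU W hW lamTilde hlam upreRes hres
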